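/- arXiv:2401.15310 — 3 statements merged into one kernel-verified Lean document; each statement's English description precedes it below -/
import Mathlib

section
/- Define the Catalan triangle by E_{0,0} = 1, E_{n,k} = 0 for k > n or k < 0, and E_{n,k} = E_{n-1,k-1} + 2 E_{n-1,k} + E_{n-1,k+1} for n ≥ 1. Then E_{n,0} = C_{n+1}, the (n+1)-st Catalan number. -/
/-!
Entry `E n k` is the ballot number `C(2n+1, n-k) - C(2n+1, n+k+2)`: one step of the triangle
is two steps of a simple ±1 walk at height `2k+1`, and the reflection principle counts such walks
that stay positive. Read with a binomial coefficient that vanishes at negative lower index, this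
formula satisfies the recurrence at every integer `k` and vanishes at `k = -1` and `k > n`, so it
agrees with `E` by induction on `n`; at `k = 0` it is `C(2n+1, n) - C(2n+1, n+2) = C_{n+1}`.
-/

-- Vanishing at negative lower index makes Pascal's rule hold at every integer `k`,
-- so `ballot` satisfies the triangle recurrence without boundary cases.
def chooseInt (n : ℕ) : ℤ → ℕ
  | (k : ℕ) => n.choose k
  | Int.negSucc _ => 0

lemma chooseInt_of_neg (n : ℕ) {k : ℤ} (hk : k < 0) : chooseInt n k = 0 := by
  rcases k with j | j
  · exact absurd hk (by simp)
  · rfl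

lemma chooseInt_of_lt (n : ℕ) {k : ℤ} (hk : (n : ℤ) < k) : chooseInt n k = 0 := by
  lift k to ℕ using by omega
  exact Nat.choose_eq_zero_of_lt (by omega)

lemma chooseInt_succ_succ (n : ℕ) (k : ℤ) :
    chooseInt (n + 1) (k + 1) = chooseInt n k + chooseInt n (k + 1) := by
  rcases k with j | j
  · exact Nat.choose_succ_succ n j
  · rcases j with _ | j
    · simp [chooseInt]
    · rfl

lemma chooseInt_add_two_add_two (n : ℕ) (k : ℤ) :
    chooseInt (n + 2) (k + 2) = chooseInt n k + 2 * chooseInt n (k + 1) + chooseInt n (k + 2) := by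
  rw [show k + 2 = k + 1 + 1 by ring, chooseInt_succ_succ, chooseInt_succ_succ,
    chooseInt_succ_succ]
  ring

def ballot (n : ℕ) (k : ℤ) : ℤ :=
  chooseInt (2 * n + 1) (n - k) - chooseInt (2 * n + 1) (n + k + 2)

lemma ballot_neg_one (n : ℕ) : ballot n (-1) = 0 := by
  simp only [ballot]
  ring_nf

lemma ballot_of_lt (n : ℕ) {k : ℤ} (hk : (n : ℤ) < k) : ballot n k = 0 := by
  rw [ballot, chooseInt_of_neg _ (by omega), chooseInt_of_lt _ (by omega)]
  rfl

lemma ballot_succ (n : ℕ) (k : ℤ) :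
    ballot (n + 1) k = ballot n (k - 1) + 2 * ballot n k + ballot n (k + 1) := by
  have h₁ := chooseInt_add_two_add_two (2 * n + 1) (n - k - 1)
  have h₂ := chooseInt_add_two_add_two (2 * n + 1) (n + k + 1)
  simp only [ballot]
  push_cast
  rw [show 2 * (n + 1) + 1 = 2 * n + 1 + 2 by ring,
    show ((n : ℤ) + 1 - k) = n - k - 1 + 2 by ring,
    show ((n : ℤ) + 1 + k + 2) = n + k + 1 + 2 by ring, h₁, h₂]
  push_cast
  ring_nf

lemma catalan_succ_eq_choose_sub_choose (n : ℕ) :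
    (catalan (n + 1) : ℤ) = (2 * n + 1).choose n - (2 * n + 1).choose (n + 2) := by
  have hcentral := succ_mul_catalan_eq_centralBinom (n + 1)
  rw [Nat.centralBinom, show 2 * (n + 1) = 2 * n + 1 + 1 by ring, Nat.choose_succ_succ] at hcentral
  have hsymm : (2 * n + 1).choose (n + 1) = (2 * n + 1).choose n := by
    simpa [show 2 * n + 1 - n = n + 1 by omega] using
      Nat.choose_symm (n := 2 * n + 1) (k := n) (by omega)
  have hstep := Nat.choose_succ_right_eq (2 * n + 1) (n + 1)
  rw [show 2 * n + 1 - (n + 1) = n by omega, hsymm] at hstep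
  have hpos : (n : ℤ) + 2 ≠ 0 := by positivity
  apply mul_left_cancel₀ hpos
  rw [hsymm] at hcentral
  zify at hcentral hstep
  linear_combination hcentral + hstep

lemma ballot_eq_zero {n : ℕ} {k : ℤ} (hk : -1 ≤ k) (h : k < 0 ∨ (n : ℤ) < k) :
    ballot n k = 0 := by
  rcases h with h | h
  · obtain rfl : k = -1 := by omega
    exact ballot_neg_one n
  · exact ballot_of_lt n h

lemma ballot_zero_right (n : ℕ) : ballot n 0 = catalan (n + 1) := by
  rw [catalan_succ_eq_choose_sub_choose]
  rfl

structure IsCatalanTriangle (E : ℕ → ℤ → ℕ) : Prop where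
  zero_zero : E 0 0 = 1
  eq_zero : ∀ (m : ℕ) (k : ℤ), (k < 0 ∨ (m : ℤ) < k) → E m k = 0
  recurrence : ∀ m : ℕ, 1 ≤ m → ∀ k : ℤ, 0 ≤ k → k ≤ (m : ℤ) →
    E m k = E (m - 1) (k - 1) + 2 * E (m - 1) k + E (m - 1) (k + 1)

namespace IsCatalanTriangle

variable {E : ℕ → ℤ → ℕ}

theorem eq_ballot (hE : IsCatalanTriangle E) (n : ℕ) {k : ℤ} (hk : -1 ≤ k) :
    (E n k : ℤ) = ballot n k := by
  induction n generalizing k with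
  | zero =>
    by_cases h : k < 0 ∨ ((0 : ℕ) : ℤ) < k
    · rw [hE.eq_zero 0 k h, ballot_eq_zero hk h, Nat.cast_zero]
    · obtain rfl : k = 0 := by omega
      rw [hE.zero_zero]
      rfl
  | succ n ih =>
    by_cases h : k < 0 ∨ ((n + 1 : ℕ) : ℤ) < k
    · rw [hE.eq_zero _ k h, ballot_eq_zero hk h, Nat.cast_zero]
    · simp only [not_or, not_lt] at h
      rw [hE.recurrence (n + 1) n.succ_pos k h.1 h.2, Nat.add_sub_cancel, ballot_succ]
      push_cast
      rw [ih (by omega), ih (by omega), ih (by omega)]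

end IsCatalanTriangle

/-- the first column of the Catalan triangle consists of Catalan numbers:
`E_{n,0} = C_{n+1}`. -/
theorem stmt7 (E : ℕ → ℤ → ℕ)
    (hE0 : E 0 0 = 1)
    (hEzero : ∀ (m : ℕ) (k : ℤ), (k < 0 ∨ (m : ℤ) < k) → E m k = 0)
    (hErec : ∀ m : ℕ, 1 ≤ m → ∀ k : ℤ, 0 ≤ k → k ≤ (m : ℤ) →
      E m k = E (m - 1) (k - 1) + 2 * E (m - 1) k + E (m - 1) (k + 1)) :
    ∀ m : ℕ, E m 0 = catalan (m + 1) := by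
  intro m
  have hE : IsCatalanTriangle E := ⟨hE0, hEzero, hErec⟩
  exact_mod_cast (hE.eq_ballot m (by norm_num)).trans (ballot_zero_right m)
end

section
/- The closed form E_{n,k} = ((k+1)/(n+1)) · C(2n+2, n-k) holds for the Catalan triangle, i.e., the array defined by E_{0,0}=1, E_{n,k}=0 for k>n or k<0, and E_{n,k} = E_{n-1,k-1} + 2E_{n-1,k} + E_{n-1,k+1} satisfies this formula for all 0 ≤ k ≤ n. -/
/-!
The step `E_{m,·} ↦ E_{m+1,·}` is convolution with `1, 2, 1`, the coefficients of `(1 + x)²`,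
so two Pascal steps show that `C(2m+1, m-k) - C(2m+1, m-k-1)` obeys the recurrence for every
integer `k`. This difference vanishes for `k > m`, and at `k = -1` by the symmetry
`C(2m+1, m+1) = C(2m+1, m)` (the reflection principle), so truncated to `k ≥ 0` it satisfies the
defining conditions of the triangle, which determine it uniquely. Pascal's rule and absorption
then give `(m+1) (C(2m+1, j) - C(2m+1, j-1)) = (m-j+1) C(2m+2, j)`.
-/

def intChoose (n : ℕ) : ℤ → ℕ
  | .ofNat j => n.choose j
  | .negSucc _ => 0

@[simp]
lemma intChoose_natCast (n j : ℕ) : intChoose n j = n.choose j := rfl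

@[simp]
lemma intChoose_zero_right (n : ℕ) : intChoose n 0 = 1 := n.choose_zero_right

lemma intChoose_of_neg {n : ℕ} {j : ℤ} (hj : j < 0) : intChoose n j = 0 := by
  obtain ⟨i, rfl⟩ := Int.exists_eq_neg_ofNat (le_of_lt hj)
  cases i with
  | zero => simp at hj
  | succ i => rfl

lemma intChoose_succ_succ (n : ℕ) (j : ℤ) :
    intChoose (n + 1) (j + 1) = intChoose n j + intChoose n (j + 1) := by
  match j with
  | .ofNat j => exact Nat.choose_succ_succ' n j
  | .negSucc 0 => simp [intChoose_of_neg]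
  | .negSucc (i + 1) =>
    rw [intChoose_of_neg (by omega), intChoose_of_neg (by omega), intChoose_of_neg (by omega)]

lemma intChoose_add_two (n : ℕ) (j : ℤ) :
    intChoose (n + 2) (j + 2) = intChoose n j + 2 * intChoose n (j + 1) + intChoose n (j + 2) := by
  rw [show j + 2 = j + 1 + 1 by ring, intChoose_succ_succ (n + 1), intChoose_succ_succ,
    intChoose_succ_succ]
  ring

def ballotDiff (m : ℕ) (k : ℤ) : ℤ :=
  intChoose (2 * m + 1) (m - k) - intChoose (2 * m + 1) (m - k - 1)

lemma ballotDiff_succ (m : ℕ) (k : ℤ) :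
    ballotDiff (m + 1) k = ballotDiff m (k - 1) + 2 * ballotDiff m k + ballotDiff m (k + 1) := by
  have step (j : ℤ) : (intChoose (2 * (m + 1) + 1) (j + 2) : ℤ) =
      intChoose (2 * m + 1) j + 2 * intChoose (2 * m + 1) (j + 1) +
        intChoose (2 * m + 1) (j + 2) := by
    exact_mod_cast intChoose_add_two (2 * m + 1) j
  have h₁ := step (m - k - 1)
  have h₂ := step (m - k - 2)
  simp only [ballotDiff]
  push_cast
  ring_nf at h₁ h₂ ⊢
  linear_combination h₁ - h₂

lemma ballotDiff_neg_one (m : ℕ) : ballotDiff m (-1) = 0 := by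
  rw [ballotDiff, sub_neg_eq_add, add_sub_cancel_right, sub_eq_zero]
  exact_mod_cast Nat.choose_symm_half m

lemma ballotDiff_of_lt {m : ℕ} {k : ℤ} (h : m < k) : ballotDiff m k = 0 := by
  simp [ballotDiff, intChoose_of_neg (sub_neg.2 h),
    intChoose_of_neg (by omega : (m : ℤ) - k - 1 < 0)]

lemma succ_mul_ballotDiff {m k : ℕ} (hkm : k ≤ m) :
    (m + 1 : ℤ) * ballotDiff m k = (k + 1) * (2 * m + 2).choose (m - k) := by
  obtain ⟨j, rfl⟩ := Nat.exists_eq_add_of_le hkm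
  rw [ballotDiff, show ((k + j : ℕ) : ℤ) - k = j by push_cast; ring, Nat.add_sub_cancel_left]
  cases j with
  | zero => simp [intChoose_of_neg]
  | succ t =>
    rw [show ((t + 1 : ℕ) : ℤ) - 1 = t by push_cast; ring, intChoose_natCast, intChoose_natCast]
    have pascal := Nat.choose_succ_succ' (2 * (k + (t + 1)) + 1) t
    have absorb := Nat.choose_succ_right_eq (2 * (k + (t + 1)) + 1) t
    zify [show t ≤ 2 * (k + (t + 1)) + 1 by omega] at absorb
    rw [show 2 * (k + (t + 1)) + 2 = 2 * (k + (t + 1)) + 1 + 1 by ring, pascal]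
    push_cast
    linear_combination absorb

structure IsCatalanTriangle_s9 {R : Type*} [Semiring R] (E : ℕ → ℤ → R) : Prop where
  zero_zero : E 0 0 = 1
  eq_zero_of_lt_or_lt : ∀ (m : ℕ) (k : ℤ), k < 0 ∨ (m : ℤ) < k → E m k = 0
  succ : ∀ (m : ℕ) (k : ℤ), 0 ≤ k → k ≤ m + 1 →
    E (m + 1) k = E m (k - 1) + 2 * E m k + E m (k + 1)

namespace IsCatalanTriangle_s9

variable {R : Type*} [Semiring R] {E F : ℕ → ℤ → R}

lemma map {S : Type*} [Semiring S] (hE : IsCatalanTriangle_s9 E) (f : R →+* S) :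
    IsCatalanTriangle_s9 fun m k ↦ f (E m k) where
  zero_zero := by simp [hE.zero_zero]
  eq_zero_of_lt_or_lt m k h := by simp [hE.eq_zero_of_lt_or_lt m k h]
  succ m k h₀ h₁ := by simp [hE.succ m k h₀ h₁, map_ofNat]

lemma unique (hE : IsCatalanTriangle_s9 E) (hF : IsCatalanTriangle_s9 F) : E = F := by
  funext m
  induction m with
  | zero =>
    funext k
    rcases eq_or_ne k 0 with rfl | hk
    · rw [hE.zero_zero, hF.zero_zero]
    · have h : k < 0 ∨ ((0 : ℕ) : ℤ) < k := by omega
      rw [hE.eq_zero_of_lt_or_lt 0 k h, hF.eq_zero_of_lt_or_lt 0 k h]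
  | succ m ih =>
    funext k
    by_cases h : k < 0 ∨ ((m + 1 : ℕ) : ℤ) < k
    · rw [hE.eq_zero_of_lt_or_lt _ k h, hF.eq_zero_of_lt_or_lt _ k h]
    · push Not at h
      rw [hE.succ m k h.1 (by exact_mod_cast h.2), hF.succ m k h.1 (by exact_mod_cast h.2), ih]

end IsCatalanTriangle_s9

lemma isCatalanTriangle_ballotDiff :
    IsCatalanTriangle_s9 fun m k ↦ if k < 0 then 0 else ballotDiff m k where
  zero_zero := by decide
  eq_zero_of_lt_or_lt m k h := by
    rcases h with h | h
    · simp [h]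
    · simp [ballotDiff_of_lt h, show ¬ k < 0 by omega]
  succ m k h₀ h₁ := by
    rcases h₀.eq_or_lt with rfl | h₀
    · simp [ballotDiff_neg_one, ballotDiff_succ]
    · simp [ballotDiff_succ, show ¬ k < 0 by omega, show ¬ k - 1 < 0 by omega,
        show ¬ k + 1 < 0 by omega]

/-- the closed form `E_{n,k} = ((k+1)/(n+1))·C(2n+2, n-k)` for the
Catalan triangle. -/
theorem stmt9 (E : ℕ → ℤ → ℕ)
    (hE0 : E 0 0 = 1)
    (hEzero : ∀ (m : ℕ) (k : ℤ), (k < 0 ∨ (m : ℤ) < k) → E m k = 0)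
    (hErec : ∀ m : ℕ, 1 ≤ m → ∀ k : ℤ, 0 ≤ k → k ≤ (m : ℤ) →
      E m k = E (m - 1) (k - 1) + 2 * E (m - 1) k + E (m - 1) (k + 1)) :
    ∀ m k : ℕ, k ≤ m → (m + 1) * E m (k : ℤ) = (k + 1) * Nat.choose (2 * m + 2) (m - k) := by
  have hE : IsCatalanTriangle_s9 E :=
    { zero_zero := hE0
      eq_zero_of_lt_or_lt := hEzero
      succ m k h₀ h₁ := hErec (m + 1) m.succ_pos k h₀ (by exact_mod_cast h₁) }
  intro m k hkm
  have hclosed := (hE.map (Nat.castRingHom ℤ)).unique isCatalanTriangle_ballotDiff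
  have h : (E m k : ℤ) = ballotDiff m k := by
    simpa [(Int.natCast_nonneg k).not_gt] using congrFun (congrFun hclosed m) k
  exact_mod_cast h ▸ succ_mul_ballotDiff hkm
end

section
/- Let n ≥ 3 and let A be a commutative ring (containing ℚ) with a derivation D. Define the n-ary operation m_n(a_1,...,a_n) = D(a_1 ⋯ a_n). Then m_n is symmetric and satisfies the n-Com relation: Σ_{σ ∈ C} sgn(σ) m_n(m_n(a_{σ(1)},...,a_{σ(n-1)}, a_n), a_{σ(n+1)},...,a_{σ(2n-1)}) = 0 for all a_1,...,a_{2n-1} ∈ A, where C is the subgroup of Σ_{2n-1} generated by the transpositions (1, n+1), (2, n+2), ..., (n-1, 2n-1). -/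
/-!
Expanding the inner `D` by the Leibniz rule, the summand for `σ` becomes
`∑_{k < n} G (σ k)` with `G p = D (D (a p) * ∏_{m ≠ p} a m)`: the outer product supplies exactly
the entries missing from the `k`-th term. For a fixed `k < n`, since there are at least two
columns, some column transposition `(i, i + n)` with `i ≠ k` fixes `k`; right multiplication by it
is a sign-reversing involution of `C` preserving `G (σ k)`, so each of these sums vanishes.
-/

open Finset Equiv

theorem Derivation.leibniz_prod {R A M : Type*} [CommSemiring R] [CommSemiring A]
    [AddCommMonoid M] [Algebra R A] [Module A M] [Module R M] (D : Derivation R A M) {ι : Type*}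
    [DecidableEq ι] (s : Finset ι) (f : ι → A) :
    D (∏ i ∈ s, f i) = ∑ i ∈ s, (∏ j ∈ s.erase i, f j) • D (f i) := by
  induction s using Finset.induction_on with
  | empty => simp
  | @insert x s hx ih =>
    rw [prod_insert hx, D.leibniz, ih, sum_insert hx, erase_insert hx, smul_sum, add_comm]
    congr 1
    refine sum_congr rfl fun i hi => ?_
    have hix : x ≠ i := fun h => hx (h ▸ hi)
    rw [erase_insert_of_ne hix, prod_insert fun h => hx (mem_of_mem_erase h), mul_smul]

theorem Derivation.apply_apply_prod_mul_prod {R A : Type*} [CommSemiring R] [CommSemiring A]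
    [Algebra R A] (D : Derivation R A A) {ι : Type*} [DecidableEq ι] {s t : Finset ι}
    (hst : Disjoint s t) (f : ι → A) :
    D (D (∏ i ∈ s, f i) * ∏ j ∈ t, f j) = ∑ k ∈ s, D (D (f k) * ∏ j ∈ (s ∪ t).erase k, f j) := by
  rw [D.leibniz_prod, sum_mul, map_sum]
  refine sum_congr rfl fun k hk => ?_
  have hkt : k ∉ t := disjoint_left.1 hst hk
  rw [erase_union_distrib, erase_eq_of_notMem hkt,
    prod_union (disjoint_of_subset_left (erase_subset k s) hst), smul_eq_mul]
  congr 1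
  ring

theorem Equiv.prod_erase_comp {α β M : Type*} [Fintype α] [Fintype β] [DecidableEq α]
    [DecidableEq β] [CommMonoid M] (e : α ≃ β) (g : β → M) (k : α) :
    ∏ j ∈ univ.erase k, g (e j) = ∏ j ∈ univ.erase (e k), g j :=
  prod_equiv e (by simp [e.injective.ne_iff]) fun _ _ => rfl

theorem Equiv.Perm.sum_filter_mem_sign_smul_eq_zero {α M : Type*} [Fintype α] [DecidableEq α]
    [AddCommGroup M] (H : Subgroup (Perm α)) [DecidablePred (· ∈ H)] {x y : α} (hxy : x ≠ y)
    (hH : swap x y ∈ H) (f : Perm α → M) (hf : ∀ σ, f (σ * swap x y) = f σ) :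
    ∑ σ ∈ univ.filter (· ∈ H), (Perm.sign σ : ℤ) • f σ = 0 := by
  have hsign : Perm.sign (swap x y) = -1 := Perm.sign_swap hxy
  refine sum_involution (fun σ _ => σ * swap x y) (fun σ _ => ?_) (fun σ _ _ h => ?_)
    (fun σ hσ => ?_) (fun σ _ => ?_)
  · rw [hf, map_mul, hsign]
    simp
  · have : swap x y = 1 := mul_left_cancel (h.trans (mul_one σ).symm)
    simp [this] at hsign
  · simp only [mem_filter, mem_univ, true_and] at hσ ⊢
    exact mul_mem hσ hH
  · simp [mul_assoc]

theorem Derivation.apply_apply_prod_two_rows {R A : Type*} [CommSemiring R] [CommSemiring A]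
    [Algebra R A] (n : ℕ) (D : Derivation R A A) (b : Fin (2 * n - 1) → A) :
    D (D (∏ i : Fin n, b ⟨i, by omega⟩) * ∏ j : Fin (n - 1), b ⟨j + n, by omega⟩) =
      ∑ k : Fin n, D (D (b ⟨k, by omega⟩) * ∏ m ∈ univ.erase ⟨k, by omega⟩, b m) := by
  let row₁ : Fin n ↪ Fin (2 * n - 1) := Fin.castLEEmb (by omega)
  let row₂ : Fin (n - 1) ↪ Fin (2 * n - 1) :=
    ⟨fun j => ⟨j + n, by omega⟩, fun i j h => by simpa [Fin.ext_iff] using h⟩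
  have hdisj : Disjoint (univ.map row₁) (univ.map row₂) := by
    simp only [disjoint_left, mem_map, mem_univ, true_and]
    rintro _ ⟨i, rfl⟩ ⟨j, h⟩
    have h : (j : ℕ) + n = i := congrArg Fin.val h
    omega
  have hunion : univ.map row₁ ∪ univ.map row₂ = univ := by
    refine eq_univ_of_forall fun m => ?_
    simp only [mem_union, mem_map, mem_univ, true_and]
    by_cases hm : (m : ℕ) < n
    · exact .inl ⟨⟨m, hm⟩, rfl⟩
    · exact .inr ⟨⟨m - n, by omega⟩, Fin.ext (show (m : ℕ) - n + n = m by omega)⟩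
  have := D.apply_apply_prod_mul_prod hdisj b
  rwa [prod_map, prod_map, hunion, sum_map] at this

open scoped Classical in
/-- for a derivation `D` on a commutative `ℚ`-algebra `A` and `n ≥ 3`,
the `n`-ary operation `m_n(a_1,…,a_n) = D(a_1 ⋯ a_n)` is symmetric and satisfies the
`n`-Com relation: the signed sum over the column-stabilizer subgroup `C` of `Σ_{2n-1}`
generated by the transpositions `(1,n+1), …, (n-1,2n-1)` of
`m_n(m_n(a_{σ(1)},…,a_{σ(n)}), a_{σ(n+1)},…,a_{σ(2n-1)})` vanishes. -/
theorem stmt18 (n : ℕ) (hn : 3 ≤ n) (A : Type*) [CommRing A] [Algebra ℚ A]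
    (D : Derivation ℚ A A) (a : Fin (2 * n - 1) → A) :
    (∀ (v : Fin n → A) (e : Equiv.Perm (Fin n)), D (∏ i, v (e i)) = D (∏ i, v i)) ∧
    ∑ σ ∈ Finset.univ.filter (fun σ : Equiv.Perm (Fin (2 * n - 1)) =>
        σ ∈ Subgroup.closure {e : Equiv.Perm (Fin (2 * n - 1)) | ∃ i : Fin (n - 1),
          e = Equiv.swap ⟨i.1, by have := i.isLt; omega⟩ ⟨i.1 + n, by have := i.isLt; omega⟩}),
      (Equiv.Perm.sign σ : ℤ) •
        (D ((D (∏ i : Fin n, a (σ ⟨i.1, by have := i.isLt; omega⟩))) *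
          ∏ j : Fin (n - 1), a (σ ⟨j.1 + n, by have := j.isLt; omega⟩)) : A) = 0 := by
  refine ⟨fun v e => by rw [Equiv.prod_comp], ?_⟩
  rw [sum_congr rfl (g := fun σ => ∑ k : Fin n, (Perm.sign σ : ℤ) •
      D (D (a (σ ⟨k, by omega⟩)) * ∏ m ∈ univ.erase (σ ⟨k, by omega⟩), a m)) fun σ _ => by
    rw [D.apply_apply_prod_two_rows n fun m => a (σ m), smul_sum]
    simp only [Equiv.prod_erase_comp], sum_comm]
  refine sum_eq_zero fun k _ => ?_
  obtain ⟨i, hik⟩ : ∃ i : Fin (n - 1), i.1 ≠ k.1 :=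
    ⟨⟨if k.1 = 0 then 1 else 0, by split_ifs <;> omega⟩, by split_ifs <;> simp <;> omega⟩
  refine Perm.sum_filter_mem_sign_smul_eq_zero _ (x := ⟨i, by omega⟩) (y := ⟨i + n, by omega⟩)
    (by simp [Fin.ext_iff]; omega) ?_ _ fun σ => ?_
  · exact Subgroup.subset_closure ⟨i, rfl⟩
  · rw [Perm.mul_apply, swap_apply_of_ne_of_ne (by simp [Fin.ext_iff]; omega)
      (by simp [Fin.ext_iff]; omega)]
end
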